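/- Let T, U be closed subspaces of a Hilbert space H with cos(φ_{T,U}) > 0, (u_j) a frame for U with synthesis operator U and (t_k) a frame for T with synthesis operator T. Then the range of T*U equals the range of T*; consequently the ranges of T*U and U*T are closed subspaces of ℓ². -/

import Mathlib

noncomputable section
open scoped InnerProductSpace ENNReal

/-- The sequence space ℓ²(ℕ). -/
abbrev Lp2 : Type := lp (fun _ : ℕ => ℂ) 2

/-- `u` is a frame for the subspace `U` with frame bounds `A` and `B`:
`A‖f‖² ≤ Σ_j |⟨f,u_j⟩|² ≤ B‖f‖²` for all `f ∈ U`, and all `u_j ∈ U`. -/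
def IsFrameFor {H : Type} [NormedAddCommGroup H] [InnerProductSpace ℂ H]
    (u : ℕ → H) (U : Submodule ℂ H) (A B : ℝ) : Prop :=
  (∀ j, u j ∈ U) ∧
    ∀ f ∈ U, A * ‖f‖ ^ 2 ≤ ∑' j, ‖⟪u j, f⟫_ℂ‖ ^ 2 ∧
      ∑' j, ‖⟪u j, f⟫_ℂ‖ ^ 2 ≤ B * ‖f‖ ^ 2

/-- `cos(φ_{T,U}) = inf_{g ∈ T, ‖g‖=1} ‖P_U g‖` (orthogonal-projection form). -/
def cosAngleP {H : Type} [NormedAddCommGroup H] [InnerProductSpace ℂ H]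
    [CompleteSpace H] (T U : Submodule ℂ H) [CompleteSpace U] : ℝ :=
  sInf {r : ℝ | ∃ g ∈ T, ‖g‖ = 1 ∧ r = ‖(U.orthogonalProjectionOnto g : H)‖}

/-- `cos(φ_{T,Y}) = inf_{g ∈ T, ‖g‖=1} sup_{v ∈ Y, ‖v‖=1} |⟨g,v⟩|` (inner-product form,
for a general subset `Y`). -/
def cosAngleS {H : Type} [NormedAddCommGroup H] [InnerProductSpace ℂ H]
    (T : Submodule ℂ H) (Y : Set H) : ℝ :=
  sInf {r : ℝ | ∃ g ∈ T, ‖g‖ = 1 ∧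
    r = sSup {s : ℝ | ∃ v ∈ Y, ‖v‖ = 1 ∧ s = ‖⟪g, v⟫_ℂ‖}}

/-!
The lower frame bound says that `U*` is bounded below on `U`; the adjoint of that restriction
is `P_U` after the synthesis operator, so it is onto `U`, and the synthesis operator maps `ℓ²`
onto `U`. Likewise `cos(φ_{T,U}) > 0` says that `P_U` is bounded below on `T`, so its adjoint,
`P_T` restricted to `U`, maps `U` onto `T`. As `T* = T* P_T`, this gives
`R(T*U) = T*(U) = T*(P_T U) = T*(T) = R(T*)`. Finally `T*(T)` and `U*(T)` are closed, being
images of the complete space `T` under maps bounded below: `T*` by the lower frame bound of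
`(t_k)`, and `U* = U* P_U` as a composite of two such maps.
-/

open scoped NNReal InnerProduct

namespace ContinuousLinearMap

section Normed

variable {𝕜 E F : Type*} [NontriviallyNormedField 𝕜]
  [NormedAddCommGroup E] [NormedSpace 𝕜 E] [NormedAddCommGroup F] [NormedSpace 𝕜 F]

theorem antilipschitz_of_mul_norm_le (L : E →L[𝕜] F) {c : ℝ} (hc : 0 < c)
    (h : ∀ x, c * ‖x‖ ≤ ‖L x‖) : AntilipschitzWith (Real.toNNReal c)⁻¹ L :=
  L.antilipschitz_of_bound fun x => by
    rw [NNReal.coe_inv, Real.coe_toNNReal _ hc.le, inv_mul_eq_div, le_div_iff₀ hc, mul_comm]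
    exact h x

theorem isClosed_image_of_antilipschitz (L : E →L[𝕜] F) (K : Submodule 𝕜 E) [CompleteSpace K]
    {C : ℝ≥0} (hL : AntilipschitzWith C (L ∘L K.subtypeL)) : IsClosed (L '' K) := by
  have := hL.isClosed_range (L ∘L K.subtypeL).uniformContinuous
  rwa [coe_comp, Set.range_comp, Submodule.coe_subtypeL, Submodule.coe_subtype,
    Subtype.range_coe] at this

end Normed

section Hilbert

variable {𝕜 E F : Type*} [RCLike 𝕜]
  [NormedAddCommGroup E] [InnerProductSpace 𝕜 E] [CompleteSpace E]
  [NormedAddCommGroup F] [InnerProductSpace 𝕜 F] [CompleteSpace F]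

theorem antilipschitz_adjoint_comp_self (L : E →L[𝕜] F) {K : ℝ≥0}
    (hL : AntilipschitzWith K L) : AntilipschitzWith (K ^ 2) (L† ∘L L) := by
  set S : E →L[𝕜] E := L† ∘L L
  refine S.antilipschitz_of_bound fun x => ?_
  have key : ‖x‖ * ‖x‖ ≤ K ^ 2 * ‖S x‖ * ‖x‖ :=
    calc ‖x‖ * ‖x‖ ≤ K ^ 2 * ‖L x‖ ^ 2 := by
          rw [← pow_two, ← mul_pow]
          exact pow_le_pow_left₀ (norm_nonneg x) (L.bound_of_antilipschitz hL x) 2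
      _ = K ^ 2 * RCLike.re ⟪S x, x⟫_𝕜 := by rw [apply_norm_sq_eq_inner_adjoint_left]
      _ ≤ K ^ 2 * ‖S x‖ * ‖x‖ := by
          rw [mul_assoc]
          gcongr
          exact (RCLike.re_le_norm _).trans (norm_inner_le_norm _ _)
  rcases (norm_nonneg x).eq_or_lt with hx | hx
  · rw [← hx]; positivity
  · push_cast; exact le_of_mul_le_mul_right key hx

/-- `L† ∘L L` is bounded below and has dense range (its kernel is that of `L`), hence is onto. -/
theorem adjoint_surjective_of_antilipschitz (L : E →L[𝕜] F) {K : ℝ≥0}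
    (hL : AntilipschitzWith K L) : Function.Surjective (L†) := by
  set S : E →L[𝕜] E := L† ∘L L
  have hclosed : IsClosed (Set.range S) :=
    (L.antilipschitz_adjoint_comp_self hL).isClosed_range S.uniformContinuous
  have : CompleteSpace (LinearMap.range (S : E →ₗ[𝕜] E)) := by
    rw [← coe_coe, ← LinearMap.coe_range] at hclosed
    exact hclosed.completeSpace_coe
  have hperp : (LinearMap.range (S : E →ₗ[𝕜] E))ᗮ = ⊥ := by
    rw [orthogonal_range, adjoint_comp, adjoint_adjoint, ker_adjoint_comp_self,
      LinearMap.ker_eq_bot]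
    exact hL.injective
  intro y
  obtain ⟨x, hx⟩ := LinearMap.range_eq_top.mp (Submodule.orthogonal_eq_bot_iff.mp hperp) y
  exact ⟨L x, hx⟩

end Hilbert

end ContinuousLinearMap

section Angle

variable {H : Type} [NormedAddCommGroup H] [InnerProductSpace ℂ H] [CompleteSpace H]
  (T U : Submodule ℂ H) [CompleteSpace U]

theorem cosAngleP_mul_norm_le {g : H} (hg : g ∈ T) :
    cosAngleP T U * ‖g‖ ≤ ‖U.starProjection g‖ := by
  rcases eq_or_ne g 0 with rfl | hg0
  · simp
  have hpos : 0 < ‖g‖ := norm_pos_iff.mpr hg0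
  set a : ℂ := ((‖g‖⁻¹ : ℝ) : ℂ)
  have ha : ‖a‖ = ‖g‖⁻¹ := by simp [a]
  have hle : cosAngleP T U ≤ ‖U.starProjection (a • g)‖ :=
    csInf_le ⟨0, by rintro r ⟨g, -, -, rfl⟩; exact norm_nonneg _⟩
      ⟨a • g, T.smul_mem a hg, by rw [norm_smul, ha, inv_mul_cancel₀ hpos.ne'], rfl⟩
  rwa [map_smul, norm_smul, ha, inv_mul_eq_div, le_div_iff₀ hpos] at hle

theorem antilipschitz_orthogonalProjectionOnto_comp_subtypeL (hangle : 0 < cosAngleP T U) :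
    AntilipschitzWith (Real.toNNReal (cosAngleP T U))⁻¹
      (U.orthogonalProjectionOnto ∘L T.subtypeL) :=
  (U.orthogonalProjectionOnto ∘L T.subtypeL).antilipschitz_of_mul_norm_le hangle fun g =>
    cosAngleP_mul_norm_le T U g.2

/-- `P_T` maps `U` onto `T`: its restriction to `U` is the adjoint of `P_U` restricted to `T`,
which is bounded below by `cos(φ_{T,U})`. -/
theorem starProjection_image_eq_of_cosAngleP_pos [CompleteSpace T] (hangle : 0 < cosAngleP T U) :
    T.starProjection '' U = T := by
  have hsurj := (U.orthogonalProjectionOnto ∘L T.subtypeL).adjoint_surjective_of_antilipschitz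
    (antilipschitz_orthogonalProjectionOnto_comp_subtypeL T U hangle)
  rw [ContinuousLinearMap.adjoint_comp, Submodule.adjoint_subtypeL,
    Submodule.adjoint_orthogonalProjectionOnto] at hsurj
  refine Set.Subset.antisymm (Set.image_subset_iff.mpr fun f _ => T.starProjection_apply_mem f) ?_
  intro g hg
  obtain ⟨f, hf⟩ := hsurj ⟨g, hg⟩
  exact ⟨f, f.2, congrArg Subtype.val hf⟩

end Angle

theorem lp.norm_sq_eq_tsum {ι : Type*} {E : ι → Type*} [∀ i, NormedAddCommGroup (E i)]
    (x : lp E 2) : ‖x‖ ^ 2 = ∑' i, ‖x i‖ ^ 2 := by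
  simpa using lp.norm_rpow_eq_tsum (by norm_num : 0 < (2 : ℝ≥0∞).toReal) x

section Frame

variable {H : Type} [NormedAddCommGroup H] [InnerProductSpace ℂ H]
  {u : ℕ → H} {Ustar : H →L[ℂ] Lp2}

theorem norm_sq_analysis (hUstar : ∀ f j, Ustar f j = ⟪u j, f⟫_ℂ) (f : H) :
    ‖Ustar f‖ ^ 2 = ∑' j, ‖⟪u j, f⟫_ℂ‖ ^ 2 := by
  simp only [lp.norm_sq_eq_tsum, hUstar]

theorem analysis_comp_starProjection (U : Submodule ℂ H) [U.HasOrthogonalProjection]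
    (hu : ∀ j, u j ∈ U) (hUstar : ∀ f j, Ustar f j = ⟪u j, f⟫_ℂ) :
    Ustar ∘L U.starProjection = Ustar := by
  ext f j
  rw [ContinuousLinearMap.comp_apply, hUstar, hUstar, eq_comm, ← sub_eq_zero, ← inner_sub_right]
  exact Submodule.sub_starProjection_mem_orthogonal f _ (hu j)

theorem range_analysis (U : Submodule ℂ H) [U.HasOrthogonalProjection] (hu : ∀ j, u j ∈ U)
    (hUstar : ∀ f j, Ustar f j = ⟪u j, f⟫_ℂ) : Set.range Ustar = Ustar '' U := by
  refine Set.Subset.antisymm ?_ (Set.image_subset_range _ _)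
  rintro _ ⟨f, rfl⟩
  exact ⟨U.starProjection f, U.starProjection_apply_mem f,
    DFunLike.congr_fun (analysis_comp_starProjection U hu hUstar) f⟩

theorem synthesis_eq_adjoint_analysis [CompleteSpace H] {Usyn : Lp2 →L[ℂ] H}
    (hUsyn : ∀ j, Usyn (lp.single 2 j 1) = u j) (hUstar : ∀ f j, Ustar f j = ⟪u j, f⟫_ℂ) :
    Usyn = Ustar† := by
  suffices Ustar = Usyn† by rw [this, ContinuousLinearMap.adjoint_adjoint]
  refine (ContinuousLinearMap.eq_adjoint_iff Ustar Usyn).mpr fun f c => ?_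
  have hsum : HasSum (fun j => ⟪f, Usyn (lp.single 2 j (c j))⟫_ℂ) ⟪f, Usyn c⟫_ℂ :=
    (lp.hasSum_single (by norm_num) c).mapL ((innerSL ℂ f) ∘L Usyn)
  refine (lp.hasSum_inner (Ustar f) c).unique (hsum.congr_fun fun j => ?_)
  have hsingle : (lp.single 2 j (c j) : Lp2) = c j • lp.single 2 j (1 : ℂ) := by
    rw [← lp.single_smul, smul_eq_mul, mul_one]
  rw [hsingle, map_smul, hUsyn, inner_smul_right, hUstar, RCLike.inner_apply, inner_conj_symm,
    mul_comm]

end Frame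

namespace IsFrameFor

variable {H : Type} [NormedAddCommGroup H] [InnerProductSpace ℂ H]
  {u : ℕ → H} {U : Submodule ℂ H} {A B : ℝ} {Ustar : H →L[ℂ] Lp2}

theorem antilipschitz_analysis_comp_subtypeL (hframe : IsFrameFor u U A B) (hA : 0 < A)
    (hUstar : ∀ f j, Ustar f j = ⟪u j, f⟫_ℂ) :
    AntilipschitzWith (Real.toNNReal √A)⁻¹ (Ustar ∘L U.subtypeL) :=
  (Ustar ∘L U.subtypeL).antilipschitz_of_mul_norm_le (Real.sqrt_pos.mpr hA) fun f => by
    have hlow := (hframe.2 f f.2).1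
    rw [← norm_sq_analysis hUstar] at hlow
    rw [← pow_le_pow_iff_left₀ (by positivity) (norm_nonneg _) two_ne_zero, mul_pow,
      Real.sq_sqrt hA.le]
    exact hlow

theorem range_synthesis [CompleteSpace H] [CompleteSpace U] (hframe : IsFrameFor u U A B)
    (hA : 0 < A) {Usyn : Lp2 →L[ℂ] H} (hUsyn : ∀ j, Usyn (lp.single 2 j 1) = u j)
    (hUstar : ∀ f j, Ustar f j = ⟪u j, f⟫_ℂ) :
    Set.range Usyn = U := by
  have hadj := synthesis_eq_adjoint_analysis hUsyn hUstar
  have hsurj := (Ustar ∘L U.subtypeL).adjoint_surjective_of_antilipschitz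
    (hframe.antilipschitz_analysis_comp_subtypeL hA hUstar)
  rw [ContinuousLinearMap.adjoint_comp, Submodule.adjoint_subtypeL, ← hadj] at hsurj
  have hproj : U.starProjection ∘L Usyn = Usyn := by
    rw [hadj, ← (isSelfAdjoint_starProjection U).adjoint_eq, ← ContinuousLinearMap.adjoint_comp,
      analysis_comp_starProjection U hframe.1 hUstar]
  refine Set.Subset.antisymm ?_ fun f hf => ?_
  · rintro _ ⟨c, rfl⟩
    rw [← hproj]
    exact U.starProjection_apply_mem _
  · obtain ⟨c, hc⟩ := hsurj ⟨f, hf⟩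
    exact ⟨c, by rw [← hproj]; exact congrArg Subtype.val hc⟩

end IsFrameFor

theorem range_cross_gramian_general
    {H : Type} [NormedAddCommGroup H] [InnerProductSpace ℂ H] [CompleteSpace H]
    (T U : Submodule ℂ H) [CompleteSpace T] [CompleteSpace U]
    (hangle : 0 < cosAngleP T U)
    (u : ℕ → H) (A B : ℝ) (hA : 0 < A) (hframe : IsFrameFor u U A B)
    (t : ℕ → H) (C D : ℝ) (hC : 0 < C) (htframe : IsFrameFor t T C D)
    (Usyn : Lp2 →L[ℂ] H) (hUsyn : ∀ j, Usyn (lp.single 2 j 1) = u j)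
    (Ustar : H →L[ℂ] Lp2) (hUstar : ∀ f j, Ustar f j = ⟪u j, f⟫_ℂ)
    (Tsyn : Lp2 →L[ℂ] H) (hTsyn : ∀ k, Tsyn (lp.single 2 k 1) = t k)
    (Tstar : H →L[ℂ] Lp2) (hTstar : ∀ f k, Tstar f k = ⟪t k, f⟫_ℂ) :
    LinearMap.range (Tstar.comp Usyn : Lp2 →ₗ[ℂ] Lp2) = LinearMap.range (Tstar : H →ₗ[ℂ] Lp2) ∧
      IsClosed ((LinearMap.range (Tstar.comp Usyn : Lp2 →ₗ[ℂ] Lp2) : Submodule ℂ Lp2) : Set Lp2) ∧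
      IsClosed ((LinearMap.range (Ustar.comp Tsyn : Lp2 →ₗ[ℂ] Lp2) : Submodule ℂ Lp2) : Set Lp2) := by
  have hTU : Tstar '' U = Tstar '' T := by
    rw [← starProjection_image_eq_of_cosAngleP_pos T U hangle, Set.image_image]
    exact Set.image_congr fun f _ =>
      (DFunLike.congr_fun (analysis_comp_starProjection T htframe.1 hTstar) f).symm
  have hrange : Set.range (Tstar ∘L Usyn) = Set.range Tstar := by
    rw [ContinuousLinearMap.coe_comp, Set.range_comp, hframe.range_synthesis hA hUsyn hUstar, hTU,
      range_analysis T htframe.1 hTstar]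
  have hTclosed : IsClosed (Set.range Tstar) := by
    rw [range_analysis T htframe.1 hTstar]
    exact Tstar.isClosed_image_of_antilipschitz T
      (htframe.antilipschitz_analysis_comp_subtypeL hC hTstar)
  have hUT : Ustar ∘L T.subtypeL =
      (Ustar ∘L U.subtypeL) ∘L (U.orthogonalProjectionOnto ∘L T.subtypeL) :=
    ContinuousLinearMap.ext fun g =>
      (DFunLike.congr_fun (analysis_comp_starProjection U hframe.1 hUstar) (g : H)).symm
  have hUTclosed : IsClosed (Set.range (Ustar ∘L Tsyn)) := by
    rw [ContinuousLinearMap.coe_comp, Set.range_comp, htframe.range_synthesis hC hTsyn hTstar]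
    exact Ustar.isClosed_image_of_antilipschitz T <| by
      rw [hUT]
      exact (hframe.antilipschitz_analysis_comp_subtypeL hA hUstar).comp
        (antilipschitz_orthogonalProjectionOnto_comp_subtypeL T U hangle)
  simp only [← SetLike.coe_set_eq, LinearMap.coe_range, ContinuousLinearMap.coe_coe]
  exact ⟨hrange, hrange ▸ hTclosed, hUTclosed⟩

/-- If `cos(φ_{T,U}) > 0` then `R(T*U) = R(T*)`; consequently the ranges of
`T*U` and `U*T` are closed subspaces of `ℓ²`. -/
theorem range_cross_gramian
    {H : Type} [NormedAddCommGroup H] [InnerProductSpace ℂ H] [CompleteSpace H]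
    (T U : Submodule ℂ H) [CompleteSpace T] [CompleteSpace U]
    (hangle : 0 < cosAngleP T U)
    (u : ℕ → H) (A B : ℝ) (hA : 0 < A) (hAB : A ≤ B) (hframe : IsFrameFor u U A B)
    (t : ℕ → H) (C D : ℝ) (hC : 0 < C) (hCD : C ≤ D) (htframe : IsFrameFor t T C D)
    (Usyn : Lp2 →L[ℂ] H) (hUsyn : ∀ j, Usyn (lp.single 2 j 1) = u j)
    (Ustar : H →L[ℂ] Lp2) (hUstar : ∀ f j, Ustar f j = ⟪u j, f⟫_ℂ)
    (Tsyn : Lp2 →L[ℂ] H) (hTsyn : ∀ k, Tsyn (lp.single 2 k 1) = t k)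
    (Tstar : H →L[ℂ] Lp2) (hTstar : ∀ f k, Tstar f k = ⟪t k, f⟫_ℂ) :
    LinearMap.range (Tstar.comp Usyn : Lp2 →ₗ[ℂ] Lp2) = LinearMap.range (Tstar : H →ₗ[ℂ] Lp2) ∧
      IsClosed ((LinearMap.range (Tstar.comp Usyn : Lp2 →ₗ[ℂ] Lp2) : Submodule ℂ Lp2) : Set Lp2) ∧
      IsClosed ((LinearMap.range (Ustar.comp Tsyn : Lp2 →ₗ[ℂ] Lp2) : Submodule ℂ Lp2) : Set Lp2) :=
  range_cross_gramian_general T U hangle u A B hA hframe t C D hC htframe Usyn hUsyn Ustar hUstar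
    Tsyn hTsyn Tstar hTstar
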